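/- Gradient bounds for the mixture-of-regressions Gordon maps. For α > 0, β ≥ 0 with ρ = β/α, σ ≥ 0 and κ > 1, define F_σ(α,β) = 1 − A_σ(ρ) + B_σ(ρ) and G_{κ,σ}(α,β) = √( ρ²·B_σ(ρ)² + (1/(κ−1))·(1 + σ² − F_σ(α,β)² − ρ²·B_σ(ρ)²) ). Then: (a) for all 0 ≤ σ ≤ 1/2 and all (α, β) with α ≥ 1/2 and 0 ≤ β/α ≤ 1/4, the gradient of F_σ satisfies |∂F_σ/∂α(α,β)| + |∂F_σ/∂β(α,β)| ≤ 0.5; (b) there exists a universal constant C > 0 such that for all 0 ≤ σ ≤ 1/2, all κ ≥ C, and all (α, β) with α ≥ 1/2 and 0 ≤ β/α ≤ 1/4, |∂G_{κ,σ}/∂α(α,β)| + |∂G_{κ,σ}/∂β(α,β)| ≤ 0.98. -/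

import Mathlib

/-!
Both maps depend on `(α, β)` only through `ρ = β / α`, so by the chain rule the sum of the
absolute partial derivatives is `|h'(ρ)| (1 + ρ) / α ≤ (5/2) |h'(ρ)|` for the profile `h`; at
`β = 0` both partials vanish because the profiles are even in `ρ`.

Write `q = ρ² + σ² + σ²ρ²` and `D = (ρ B_σ)' = (2/π)(q + ρ²) / (√q (1 + ρ²)²)`. The profile of
`F_σ` has derivative `-ρ D`, and a polynomial inequality gives `D ≤ 0.39` on the region (its value
at `σ = 1/2, ρ = 1/4` is about 0.385).

The square of the profile of `G_{κ,σ}` is `g = (1 - ε)(ρB)² + ε (1 + σ² - F²)` with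
`ε = 1/(κ-1)`. From `arctan x ≥ x / (1 + x²)` one gets `F ≤ 1 + σ²/π`, hence `F² ≤ 1 + σ²` and
`√g ≥ √(1-ε) ρB`. Since `g' = 2D((1 - ε) ρB + ε ρF)` and `D ≤ 2B`, the derivative `g' / (2√g)`
is `D + O(ε)`, which stays below `0.392` once `ε ≤ 1/2999`.
-/

noncomputable section

/-- `A_σ(ρ) = (2/π) arctan(√(ρ² + σ² + σ²ρ²))`. -/
def Amap (σ ρ : ℝ) : ℝ :=
  2 / Real.pi * Real.arctan (Real.sqrt (ρ ^ 2 + σ ^ 2 + σ ^ 2 * ρ ^ 2))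

/-- `B_σ(ρ) = (2/π) √(ρ² + σ² + σ²ρ²)/(1 + ρ²)`. -/
def Bmap (σ ρ : ℝ) : ℝ :=
  2 / Real.pi * Real.sqrt (ρ ^ 2 + σ ^ 2 + σ ^ 2 * ρ ^ 2) / (1 + ρ ^ 2)

/-- `F_σ(α,β) = 1 − A_σ(β/α) + B_σ(β/α)`. -/
def Fm (σ α β : ℝ) : ℝ := 1 - Amap σ (β / α) + Bmap σ (β / α)

/-- `G_{κ,σ}(α,β) = √( ρ²B_σ(ρ)² + (1/(κ−1))(1 + σ² − F_σ² − ρ²B_σ(ρ)²) )`, `ρ = β/α`. -/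
def Gm (κ σ α β : ℝ) : ℝ :=
  Real.sqrt ((β / α) ^ 2 * Bmap σ (β / α) ^ 2 +
    1 / (κ - 1) * (1 + σ ^ 2 - Fm σ α β ^ 2 - (β / α) ^ 2 * Bmap σ (β / α) ^ 2))

end

open Real

lemma div_one_add_sq_le_arctan {x : ℝ} (hx : 0 ≤ x) : x / (1 + x ^ 2) ≤ arctan x := by
  have hderiv : ∀ t ∈ interior (Set.Icc 0 x), 1 / (1 + x ^ 2) ≤ deriv arctan t := by
    intro t ht
    rw [interior_Icc] at ht
    rw [Real.deriv_arctan]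
    show 1 / (1 + x ^ 2) ≤ 1 / (1 + t ^ 2)
    gcongr
    exacts [ht.1.le, ht.2.le]
  have := (convex_Icc 0 x).mul_sub_le_image_sub_of_le_deriv
    differentiable_arctan.continuous.continuousOn differentiable_arctan.differentiableOn
    hderiv 0 ⟨le_rfl, hx⟩ x ⟨hx, le_rfl⟩ hx
  simpa [div_eq_inv_mul] using this

lemma Function.Even.deriv_zero {f : ℝ → ℝ} (hf : Function.Even f) : deriv f 0 = 0 := by
  have h := deriv_comp_neg (f := f) (x := 0)
  rw [funext hf, neg_zero] at h
  linarith

lemma abs_deriv_comp_div_add_abs_deriv_comp_div_le {h : ℝ → ℝ} {c α β : ℝ} (hα : 1 / 2 ≤ α)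
    (hβ : 0 ≤ β) (hρ : β / α ≤ 1 / 4) (heven : Function.Even h)
    (hderiv : ∀ ρ, 0 < ρ → ρ ≤ 1 / 4 → ∃ d, HasDerivAt h d ρ ∧ |d| ≤ c) :
    |deriv (fun a => h (β / a)) α| + |deriv (fun b => h (b / α)) β| ≤ 5 / 2 * c := by
  have hα0 : 0 < α := by linarith
  have hc : 0 ≤ c := by
    obtain ⟨d, -, hd⟩ := hderiv (1 / 4) (by norm_num) le_rfl
    exact (abs_nonneg d).trans hd
  rcases hβ.eq_or_lt with rfl | hβ0
  · have hb : Function.Even fun b => h (b / α) := fun b => by simp only [neg_div, heven (b / α)]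
    simp only [zero_div, deriv_const', hb.deriv_zero, abs_zero, add_zero]
    positivity
  obtain ⟨d, hd, hdc⟩ := hderiv (β / α) (by positivity) hρ
  have hα' : HasDerivAt (fun a => h (β / a)) (d * -(β / α ^ 2)) α := by
    refine hd.comp α ?_
    simpa only [mul_neg, ← div_eq_mul_inv] using (hasDerivAt_inv hα0.ne').const_mul β
  have hβ' : HasDerivAt (fun b => h (b / α)) (d * (1 / α)) β :=
    hd.comp β (by simpa using (hasDerivAt_id β).div_const α)
  rw [hα'.deriv, hβ'.deriv, abs_mul, abs_mul, abs_neg, ← mul_add,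
    abs_of_nonneg (by positivity : 0 ≤ β / α ^ 2), abs_of_pos (by positivity : 0 < 1 / α)]
  have hscale : β / α ^ 2 + 1 / α ≤ 5 / 2 := by
    have : 1 / α ≤ 2 := by rw [div_le_iff₀ hα0]; linarith
    calc β / α ^ 2 + 1 / α = (1 + β / α) * (1 / α) := by field_simp; ring
      _ ≤ (1 + 1 / 4) * 2 := by gcongr
      _ = 5 / 2 := by norm_num
  calc |d| * (β / α ^ 2 + 1 / α) ≤ c * (5 / 2) := by gcongr
    _ = 5 / 2 * c := by ring

noncomputable def Qmap (σ ρ : ℝ) : ℝ := ρ ^ 2 + σ ^ 2 + σ ^ 2 * ρ ^ 2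

-- `Fm σ α β = Fprofile σ (β / α)` and `Gm κ σ α β = √(Gsq (1 / (κ - 1)) σ (β / α))` hold by `rfl`.
noncomputable def Fprofile (σ ρ : ℝ) : ℝ := 1 - Amap σ ρ + Bmap σ ρ

noncomputable def Gsq (ε σ ρ : ℝ) : ℝ :=
  ρ ^ 2 * Bmap σ ρ ^ 2 + ε * (1 + σ ^ 2 - Fprofile σ ρ ^ 2 - ρ ^ 2 * Bmap σ ρ ^ 2)

noncomputable def derivMulBmap (σ ρ : ℝ) : ℝ :=
  2 / π * (Qmap σ ρ + ρ ^ 2) / (√(Qmap σ ρ) * (1 + ρ ^ 2) ^ 2)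

section

variable {ε σ ρ : ℝ}

lemma Amap_eq (σ ρ : ℝ) : Amap σ ρ = 2 / π * arctan √(Qmap σ ρ) := rfl

lemma Bmap_eq (σ ρ : ℝ) : Bmap σ ρ = 2 / π * √(Qmap σ ρ) / (1 + ρ ^ 2) := rfl

lemma Qmap_neg (σ ρ : ℝ) : Qmap σ (-ρ) = Qmap σ ρ := by simp only [Qmap, neg_sq]

lemma Fprofile_even (σ : ℝ) : Function.Even (Fprofile σ) := fun ρ => by
  simp only [Fprofile, Amap_eq, Bmap_eq, Qmap_neg, neg_sq]

lemma sqrt_Gsq_even (ε σ : ℝ) : Function.Even fun ρ => √(Gsq ε σ ρ) := fun ρ => by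
  simp only [Gsq, Bmap_eq, Qmap_neg, neg_sq, Fprofile_even σ ρ]

lemma one_add_Qmap (σ ρ : ℝ) : 1 + Qmap σ ρ = (1 + ρ ^ 2) * (1 + σ ^ 2) := by
  unfold Qmap; ring

lemma hasDerivAt_sqrt_Qmap (hq : 0 < Qmap σ ρ) :
    HasDerivAt (fun x => √(Qmap σ x)) (ρ * (1 + σ ^ 2) / √(Qmap σ ρ)) ρ := by
  have hQ : HasDerivAt (Qmap σ) (2 * ρ * (1 + σ ^ 2)) ρ := by
    refine (((hasDerivAt_pow 2 ρ).add_const (σ ^ 2)).add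
      ((hasDerivAt_pow 2 ρ).const_mul (σ ^ 2))).congr_deriv ?_
    push_cast
    ring
  refine (hQ.sqrt hq.ne').congr_deriv ?_
  field_simp

lemma hasDerivAt_Amap (hq : 0 < Qmap σ ρ) :
    HasDerivAt (Amap σ) (2 / π * ρ / ((1 + ρ ^ 2) * √(Qmap σ ρ))) ρ := by
  have := ((hasDerivAt_sqrt_Qmap hq).arctan).const_mul (2 / π)
  rw [sq_sqrt hq.le, one_add_Qmap] at this
  refine this.congr_deriv ?_
  field_simp

lemma hasDerivAt_Bmap (hq : 0 < Qmap σ ρ) :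
    HasDerivAt (Bmap σ) (2 / π * (ρ * (1 + σ ^ 2) * (1 + ρ ^ 2) - 2 * ρ * Qmap σ ρ) /
      (√(Qmap σ ρ) * (1 + ρ ^ 2) ^ 2)) ρ := by
  have hden : HasDerivAt (fun x : ℝ => 1 + x ^ 2) (2 * ρ) ρ := by
    simpa using (hasDerivAt_pow 2 ρ).const_add 1
  have := ((hasDerivAt_sqrt_Qmap hq).const_mul (2 / π)).div hden (by positivity)
  refine this.congr_deriv ?_
  field_simp
  rw [sq_sqrt hq.le]

lemma hasDerivAt_Fprofile (hq : 0 < Qmap σ ρ) :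
    HasDerivAt (Fprofile σ) (-(ρ * derivMulBmap σ ρ)) ρ := by
  have := ((hasDerivAt_const ρ 1).sub (hasDerivAt_Amap hq)).add (hasDerivAt_Bmap hq)
  refine this.congr_deriv ?_
  simp only [derivMulBmap]
  field_simp
  unfold Qmap
  ring

lemma hasDerivAt_mul_Bmap (hq : 0 < Qmap σ ρ) :
    HasDerivAt (fun x => x * Bmap σ x) (derivMulBmap σ ρ) ρ := by
  have := (hasDerivAt_id ρ).mul (hasDerivAt_Bmap hq)
  refine this.congr_deriv ?_
  simp only [derivMulBmap, Bmap_eq, id]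
  field_simp
  rw [sq_sqrt hq.le]
  simp only [Qmap]
  ring

lemma hasDerivAt_Gsq (hq : 0 < Qmap σ ρ) :
    HasDerivAt (Gsq ε σ)
      (2 * derivMulBmap σ ρ * ((1 - ε) * (ρ * Bmap σ ρ) + ε * (ρ * Fprofile σ ρ))) ρ := by
  have hT := (hasDerivAt_mul_Bmap hq).pow 2
  have hF := (hasDerivAt_Fprofile hq).pow 2
  have hGsq : Gsq ε σ = fun x =>
      (x * Bmap σ x) ^ 2 + ε * (1 + σ ^ 2 - Fprofile σ x ^ 2 - (x * Bmap σ x) ^ 2) := by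
    funext x
    simp only [Gsq]
    ring
  rw [hGsq]
  refine (hT.add ((((hasDerivAt_const ρ (1 + σ ^ 2)).sub hF).sub hT).const_mul ε)).congr_deriv ?_
  push_cast
  ring

lemma Amap_lt_one (σ ρ : ℝ) : Amap σ ρ < 1 := by
  rw [Amap_eq]
  calc 2 / π * arctan √(Qmap σ ρ) < 2 / π * (π / 2) := by
        gcongr
        exact arctan_lt_pi_div_two _
    _ = 1 := by field_simp

lemma Bmap_nonneg (σ ρ : ℝ) : 0 ≤ Bmap σ ρ := by
  rw [Bmap_eq]
  positivity

lemma Bmap_sub_Amap_le (σ ρ : ℝ) : Bmap σ ρ - Amap σ ρ ≤ σ ^ 2 / π := by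
  set s := √(Qmap σ ρ)
  have hs : 0 ≤ s := sqrt_nonneg _
  have hs2 : 1 + s ^ 2 = (1 + ρ ^ 2) * (1 + σ ^ 2) := by
    rw [sq_sqrt (by unfold Qmap; positivity), one_add_Qmap]
  have harctan := div_one_add_sq_le_arctan hs
  calc Bmap σ ρ - Amap σ ρ = 2 / π * (s / (1 + ρ ^ 2) - arctan s) := by
        rw [Bmap_eq, Amap_eq]
        ring
    _ ≤ 2 / π * (s / (1 + ρ ^ 2) - s / (1 + s ^ 2)) := by gcongr
    _ = 2 / π * (s / (1 + s ^ 2) * σ ^ 2) := by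
        rw [hs2]
        field_simp
        ring
    _ ≤ 2 / π * (1 / 2 * σ ^ 2) := by
        have : s / (1 + s ^ 2) ≤ 1 / 2 := by
          rw [div_le_iff₀ (by positivity)]
          nlinarith [sq_nonneg (s - 1)]
        gcongr
    _ = σ ^ 2 / π := by ring

lemma Fprofile_pos (σ ρ : ℝ) : 0 < Fprofile σ ρ := by
  have := Amap_lt_one σ ρ
  have := Bmap_nonneg σ ρ
  unfold Fprofile
  linarith

lemma Fprofile_sq_le (hσ : σ ^ 2 ≤ 1) : Fprofile σ ρ ^ 2 ≤ 1 + σ ^ 2 := by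
  have hf : Fprofile σ ρ ≤ 1 + σ ^ 2 / π := by
    have := Bmap_sub_Amap_le σ ρ
    unfold Fprofile
    linarith
  have hu : σ ^ 2 / π ≤ 1 / 3 := by
    rw [div_le_iff₀ pi_pos]
    linarith [pi_gt_three]
  calc Fprofile σ ρ ^ 2 ≤ (1 + σ ^ 2 / π) ^ 2 := by gcongr; exact (Fprofile_pos σ ρ).le
    _ = 1 + σ ^ 2 / π * (2 + σ ^ 2 / π) := by ring
    _ ≤ 1 + σ ^ 2 / π * π := by
        gcongr
        linarith [pi_gt_three]
    _ = 1 + σ ^ 2 := by field_simp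

lemma Gsq_ge (hε : 0 ≤ ε) (hσ : σ ^ 2 ≤ 1) : (1 - ε) * (ρ * Bmap σ ρ) ^ 2 ≤ Gsq ε σ ρ := by
  have := mul_nonneg hε (sub_nonneg.2 (Fprofile_sq_le (ρ := ρ) hσ))
  unfold Gsq
  nlinarith

lemma derivMulBmap_pos (hq : 0 < Qmap σ ρ) : 0 < derivMulBmap σ ρ := by
  unfold derivMulBmap
  positivity

lemma derivMulBmap_le_two_mul_Bmap (hq : 0 < Qmap σ ρ) : derivMulBmap σ ρ ≤ 2 * Bmap σ ρ := by
  have hρq : ρ ^ 2 ≤ Qmap σ ρ := by unfold Qmap; nlinarith [sq_nonneg σ, sq_nonneg (σ * ρ)]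
  rw [derivMulBmap, Bmap_eq, div_le_iff₀ (by positivity)]
  calc 2 / π * (Qmap σ ρ + ρ ^ 2) ≤ 2 / π * (2 * Qmap σ ρ * (1 + ρ ^ 2)) := by
        gcongr
        nlinarith [sq_nonneg ρ]
    _ = 2 * (2 / π * √(Qmap σ ρ) / (1 + ρ ^ 2)) * (√(Qmap σ ρ) * (1 + ρ ^ 2) ^ 2) := by
        field_simp
        rw [sq_sqrt hq.le]

lemma derivMulBmap_le (hσ : σ ^ 2 ≤ 1 / 4) (hρ : ρ ^ 2 ≤ 1 / 16) (hq : 0 < Qmap σ ρ) :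
    derivMulBmap σ ρ ≤ 0.39 := by
  have hpoly : ∀ x y : ℝ, 0 ≤ x → x ≤ 1 / 16 → 0 ≤ y → y ≤ 1 / 4 →
      (x + y + y * x + x) ^ 2 ≤ 0.37515 * ((x + y + y * x) * (1 + x) ^ 4) := by
    intro x y hx0 hx hy0 hy
    nlinarith [mul_nonneg hx0 hy0, mul_nonneg (mul_nonneg hx0 hy0) hy0,
      mul_nonneg (mul_nonneg hx0 hx0) hy0, sq_nonneg (x + y), sq_nonneg (x - y),
      mul_nonneg (sub_nonneg.2 hx) (sub_nonneg.2 hy), mul_nonneg (mul_nonneg hx0 hx0) hx0,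
      mul_nonneg hy0 hy0]
  have hnum : Qmap σ ρ + ρ ^ 2 ≤ 0.6125 * (√(Qmap σ ρ) * (1 + ρ ^ 2) ^ 2) := by
    refine (pow_le_pow_iff_left₀ (by positivity) (by positivity) two_ne_zero).1 ?_
    calc (Qmap σ ρ + ρ ^ 2) ^ 2 ≤ 0.37515 * (Qmap σ ρ * (1 + ρ ^ 2) ^ 4) :=
          hpoly _ _ (sq_nonneg ρ) hρ (sq_nonneg σ) hσ
      _ ≤ 0.37515625 * (Qmap σ ρ * (1 + ρ ^ 2) ^ 4) := by gcongr; norm_num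
      _ = (0.6125 * (√(Qmap σ ρ) * (1 + ρ ^ 2) ^ 2)) ^ 2 := by
          rw [mul_pow, mul_pow, sq_sqrt hq.le]
          ring
  have hπ : 2 / π ≤ 0.6367 := by
    rw [div_le_iff₀ pi_pos]
    linarith [pi_gt_d6]
  rw [derivMulBmap, div_le_iff₀ (by positivity)]
  calc 2 / π * (Qmap σ ρ + ρ ^ 2) ≤ 0.6367 * (0.6125 * (√(Qmap σ ρ) * (1 + ρ ^ 2) ^ 2)) := by
        gcongr
    _ ≤ 0.39 * (√(Qmap σ ρ) * (1 + ρ ^ 2) ^ 2) := by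
        rw [← mul_assoc]
        gcongr
        norm_num

lemma exists_hasDerivAt_Fprofile_abs_le (hσ : σ ^ 2 ≤ 1 / 4) (hρ0 : 0 < ρ) (hρ : ρ ≤ 1 / 4) :
    ∃ d, HasDerivAt (Fprofile σ) d ρ ∧ |d| ≤ 1 / 5 := by
  have hq : 0 < Qmap σ ρ := by unfold Qmap; positivity
  refine ⟨_, hasDerivAt_Fprofile hq, ?_⟩
  have hD := derivMulBmap_le hσ (by nlinarith) hq
  rw [abs_neg, abs_of_pos (mul_pos hρ0 (derivMulBmap_pos hq))]
  nlinarith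

lemma exists_hasDerivAt_sqrt_Gsq_abs_le (hε0 : 0 ≤ ε) (hε : ε ≤ 1 / 2999)
    (hσ : σ ^ 2 ≤ 1 / 4) (hρ0 : 0 < ρ) (hρ : ρ ≤ 1 / 4) :
    ∃ d, HasDerivAt (fun x => √(Gsq ε σ x)) d ρ ∧ |d| ≤ 0.392 := by
  have hq : 0 < Qmap σ ρ := by unfold Qmap; positivity
  set T := ρ * Bmap σ ρ
  set f := Fprofile σ ρ
  set D := derivMulBmap σ ρ
  have hT : 0 < T := mul_pos hρ0 (by rw [Bmap_eq]; positivity)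
  have hD0 : 0 < D := derivMulBmap_pos hq
  have hD : D ≤ 0.39 := derivMulBmap_le hσ (by nlinarith) hq
  have hD2 : ρ * D ≤ 2 * T := by
    have := derivMulBmap_le_two_mul_Bmap hq
    nlinarith
  have hf0 : 0 < f := Fprofile_pos σ ρ
  have hf : f ≤ 1.2 := by nlinarith [Fprofile_sq_le (ρ := ρ) (by linarith : σ ^ 2 ≤ 1)]
  have hG : 0.999 * T ≤ √(Gsq ε σ ρ) := by
    apply le_sqrt_of_sq_le
    nlinarith [Gsq_ge (ρ := ρ) hε0 (by linarith : σ ^ 2 ≤ 1)]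
  have hG0 : 0 < √(Gsq ε σ ρ) := by nlinarith
  refine ⟨_, (hasDerivAt_Gsq hq).sqrt (sqrt_pos.1 hG0).ne', ?_⟩
  have hnum0 : 0 ≤ (1 - ε) * T + ε * (ρ * f) := by
    have : 0 ≤ ε * (ρ * f) := by positivity
    nlinarith
  have hnum : D * ((1 - ε) * T + ε * (ρ * f)) ≤ 0.391 * T := by
    have hmain : D * ((1 - ε) * T) ≤ 0.39 * T := by
      have : (1 - ε) * T ≤ T := by nlinarith
      calc D * ((1 - ε) * T) ≤ D * T := by gcongr
        _ ≤ 0.39 * T := by gcongr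
    have hcorr : D * (ε * (ρ * f)) ≤ 0.001 * T := by
      calc D * (ε * (ρ * f)) = ε * f * (ρ * D) := by ring
        _ ≤ 1 / 2999 * 1.2 * (2 * T) := by gcongr
        _ ≤ 0.001 * T := by nlinarith
    nlinarith
  rw [abs_of_nonneg (by positivity), div_le_iff₀ (by positivity)]
  linarith

end

/-- Gradient bounds for the mixture-of-regressions Gordon maps. -/
theorem mixture_gradient_bounds :
    (∀ σ α β : ℝ, 0 ≤ σ → σ ≤ 1 / 2 → 1 / 2 ≤ α → 0 ≤ β → β / α ≤ 1 / 4 →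
        |deriv (fun a => Fm σ a β) α| + |deriv (fun b => Fm σ α b) β| ≤ 0.5) ∧
    ∃ C : ℝ, 0 < C ∧
      ∀ σ κ α β : ℝ, 0 ≤ σ → σ ≤ 1 / 2 → 1 < κ → κ ≥ C →
        1 / 2 ≤ α → 0 ≤ β → β / α ≤ 1 / 4 →
        |deriv (fun a => Gm κ σ a β) α| + |deriv (fun b => Gm κ σ α b) β| ≤ 0.98 := by
  constructor
  · intro σ α β hσ0 hσ1 hα hβ hρ
    have hσ : σ ^ 2 ≤ 1 / 4 := by nlinarith
    calc _ ≤ 5 / 2 * (1 / 5) :=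
          abs_deriv_comp_div_add_abs_deriv_comp_div_le hα hβ hρ (Fprofile_even σ)
            fun ρ hρ0 hρ1 => exists_hasDerivAt_Fprofile_abs_le hσ hρ0 hρ1
      _ = 0.5 := by norm_num
  · refine ⟨3000, by norm_num, fun σ κ α β hσ0 hσ1 hκ hκC hα hβ hρ => ?_⟩
    have hσ : σ ^ 2 ≤ 1 / 4 := by nlinarith
    have hε0 : 0 ≤ 1 / (κ - 1) := one_div_nonneg.2 (by linarith)
    have hε : 1 / (κ - 1) ≤ 1 / 2999 := one_div_le_one_div_of_le (by norm_num) (by linarith)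
    calc _ ≤ 5 / 2 * 0.392 :=
          abs_deriv_comp_div_add_abs_deriv_comp_div_le hα hβ hρ (sqrt_Gsq_even _ σ)
            fun ρ hρ0 hρ1 => exists_hasDerivAt_sqrt_Gsq_abs_le hε0 hε hσ hρ0 hρ1
      _ = 0.98 := by norm_num
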